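/- arXiv:cs/0408044 — 2 statements merged into one kernel-verified Lean document; each statement's English description precedes it below -/
import Mathlib

section
/- Any structure satisfying the foundational state axioms of the fluent calculus (associativity, commutativity of ∘, decomposition, and state equivalence) satisfies idempotence: z ∘ z = z for every state z. -/
theorem holds_comp_of_holds_left {S F : Type*} (fl : F → S) (comp : S → S → S)
    (holds : F → S → Prop)
    (holds_def : ∀ (f : F) (z : S), holds f z ↔ ∃ z', z = comp (fl f) z')
    (assoc : ∀ z1 z2 z3 : S, comp (comp z1 z2) z3 = comp z1 (comp z2 z3))
    {f : F} {z : S} (h : holds f z) (z' : S) : holds f (comp z z') := by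
  obtain ⟨w, rfl⟩ := (holds_def f z).mp h
  exact (holds_def f _).mpr ⟨comp w z', assoc _ _ _⟩

theorem fc_idempotence_general {S F : Type*} (fl : F → S) (comp : S → S → S)
    (holds : F → S → Prop)
    (holds_def : ∀ (f : F) (z : S), holds f z ↔ ∃ z', z = comp (fl f) z')
    (assoc : ∀ z1 z2 z3 : S, comp (comp z1 z2) z3 = comp z1 (comp z2 z3))
    (decomp : ∀ (f : F) (z1 z2 : S), holds f (comp z1 z2) → holds f z1 ∨ holds f z2)
    (state_equiv : ∀ z1 z2 : S, (∀ f : F, holds f z1 ↔ holds f z2) → z1 = z2) :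
    ∀ z : S, comp z z = z := by
  intro z
  refine state_equiv _ _ fun f => ⟨fun h => (decomp f z z h).elim id id, fun h => ?_⟩
  exact holds_comp_of_holds_left fl comp holds holds_def assoc h z

theorem fc_idempotence {S F : Type*} (fl : F → S) (comp : S → S → S)
    (holds : F → S → Prop)
    (holds_def : ∀ (f : F) (z : S), holds f z ↔ ∃ z', z = comp (fl f) z')
    (assoc : ∀ z1 z2 z3 : S, comp (comp z1 z2) z3 = comp z1 (comp z2 z3))
    (comm : ∀ z1 z2 : S, comp z1 z2 = comp z2 z1)
    (decomp : ∀ (f : F) (z1 z2 : S), holds f (comp z1 z2) → holds f z1 ∨ holds f z2)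
    (state_equiv : ∀ z1 z2 : S, (∀ f : F, holds f z1 ↔ holds f z2) → z1 = z2)
    (holds_comp : ∀ (f : F) (z : S), holds f (comp (fl f) z)) :
    ∀ z : S, comp z z = z :=
  fc_idempotence_general fl comp holds holds_def assoc decomp state_equiv
end

section
/- Proposition (correctness of negation CHRs, claim 2): in a structure satisfying the foundational state axioms of the fluent calculus including uniqueness-of-names for fluents, for all fluents f, f1 and state z: ¬holds(f, f1 ∘ z) ↔ (f ≠ f1 ∧ ¬holds(f, z)). -/
section FluentCalculus

variable {S F : Type*} {fl : F → S} {comp : S → S → S} {holds : F → S → Prop}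

theorem holds_comp_left (holds_def : ∀ (f : F) (z : S), holds f z ↔ ∃ z', z = comp (fl f) z')
    (assoc : ∀ z1 z2 z3 : S, comp (comp z1 z2) z3 = comp z1 (comp z2 z3))
    (comm : ∀ z1 z2 : S, comp z1 z2 = comp z2 z1) {f : F} {z : S} (h : holds f z) (y : S) :
    holds f (comp y z) := by
  obtain ⟨z', rfl⟩ := (holds_def f z).1 h
  exact (holds_def f _).2 ⟨comp y z', by rw [← assoc, comm y, assoc]⟩

theorem holds_comp_fluent_iff
    (holds_def : ∀ (f : F) (z : S), holds f z ↔ ∃ z', z = comp (fl f) z')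
    (assoc : ∀ z1 z2 z3 : S, comp (comp z1 z2) z3 = comp z1 (comp z2 z3))
    (comm : ∀ z1 z2 : S, comp z1 z2 = comp z2 z1)
    (irred : ∀ f1 f : F, holds f1 (fl f) → f1 = f)
    (decomp : ∀ (f : F) (z1 z2 : S), holds f (comp z1 z2) → holds f z1 ∨ holds f z2)
    (f f1 : F) (z : S) :
    holds f (comp (fl f1) z) ↔ f = f1 ∨ holds f z := by
  refine ⟨fun h => (decomp f _ _ h).imp_left (irred f f1), ?_⟩
  rintro (rfl | hz)
  · exact (holds_def f _).2 ⟨z, rfl⟩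
  · exact holds_comp_left holds_def assoc comm hz (fl f1)

end FluentCalculus

theorem fc_not_holds_iff_general {S F : Type*} (fl : F → S) (comp : S → S → S)
    (holds : F → S → Prop)
    (holds_def : ∀ (f : F) (z : S), holds f z ↔ ∃ z', z = comp (fl f) z')
    (assoc : ∀ z1 z2 z3 : S, comp (comp z1 z2) z3 = comp z1 (comp z2 z3))
    (comm : ∀ z1 z2 : S, comp z1 z2 = comp z2 z1)
    (irred : ∀ f1 f : F, holds f1 (fl f) → f1 = f)
    (decomp : ∀ (f : F) (z1 z2 : S), holds f (comp z1 z2) → holds f z1 ∨ holds f z2) :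
    ∀ (f f1 : F) (z : S),
      ¬ holds f (comp (fl f1) z) ↔ (f ≠ f1 ∧ ¬ holds f z) := fun f f1 z => by
  rw [holds_comp_fluent_iff holds_def assoc comm irred decomp, not_or]

theorem fc_not_holds_iff {S F : Type*} (fl : F → S) (comp : S → S → S)
    (holds : F → S → Prop)
    (holds_def : ∀ (f : F) (z : S), holds f z ↔ ∃ z', z = comp (fl f) z')
    (assoc : ∀ z1 z2 z3 : S, comp (comp z1 z2) z3 = comp z1 (comp z2 z3))
    (comm : ∀ z1 z2 : S, comp z1 z2 = comp z2 z1)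
    (una : Function.Injective fl)
    (irred : ∀ f1 f : F, holds f1 (fl f) → f1 = f)
    (decomp : ∀ (f : F) (z1 z2 : S), holds f (comp z1 z2) → holds f z1 ∨ holds f z2) :
    ∀ (f f1 : F) (z : S),
      ¬ holds f (comp (fl f1) z) ↔ (f ≠ f1 ∧ ¬ holds f z) :=
  fc_not_holds_iff_general fl comp holds holds_def assoc comm irred decomp
end
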